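/- For every real t ≠ 0, the moment-generating function of distance on L(2;1) = ℝP³ satisfies M(2,t) = (4/(π(4+t²))) · ( 2(e^{tπ/2} − 1)/t + t · e^{tπ/2} ). -/

import Mathlib

/-!
Substituting `φ = arccos (cos θ cos η)` turns the `η`-integral into
`(cos θ)⁻² ∫_θ^{π/2} exp (t φ) sin φ cos φ dφ`, which has an elementary primitive `G`.
The `θ`-integral of `(G (π/2) - G θ) / cos² θ` over `(0, π/2)` is then evaluated with an
explicit primitive involving `tan θ`; its limit at `π/2`, where `tan` blows up, is a derivative
quotient. The integrand does not depend on `θ₂` and is even in `θ₁`, which gives the prefactor.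
-/

open MeasureTheory

/-- The moment-generating function of distance on the homogeneous lens space `L(n;1)`,
expressed as an explicit integral over a fundamental domain in join coordinates. -/
noncomputable def mgfM (n : ℕ) (t : ℝ) : ℝ :=
  ((n : ℝ) ^ 2 / (2 * Real.pi ^ 2)) *
    ∫ θ₂ in (-(Real.pi / n))..(Real.pi / n),
      ∫ θ₁ in (-(Real.pi / n))..(Real.pi / n),
        ∫ η in (0 : ℝ)..(Real.pi / 2),
          Real.exp (t * Real.arccos (Real.cos θ₁ * Real.cos η)) * Real.cos η * Real.sin η

open Real Set Filter Topology intervalIntegral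

theorem Function.Even.integral_neg_self_eq_two_mul {f : ℝ → ℝ} (hf : f.Even) (hc : Continuous f)
    (a : ℝ) : ∫ x in -a..a, f x = 2 * ∫ x in 0..a, f x := by
  have hneg : ∫ x in -a..0, f x = ∫ x in 0..a, f x := by
    simpa [hf _] using (integral_comp_neg (a := 0) (b := a) f).symm
  rw [← integral_add_adjacent_intervals (hc.intervalIntegrable _ 0) (hc.intervalIntegrable 0 _),
    hneg, two_mul]

noncomputable def expSinCosPrimitive (t φ : ℝ) : ℝ :=
  exp (t * φ) * (t * sin (2 * φ) - 2 * cos (2 * φ)) / (2 * (t ^ 2 + 4))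

theorem hasDerivAt_expSinCosPrimitive (t φ : ℝ) :
    HasDerivAt (expSinCosPrimitive t) (exp (t * φ) * sin φ * cos φ) φ := by
  have h2 : HasDerivAt (fun φ : ℝ => 2 * φ) 2 φ := by simpa using (hasDerivAt_id φ).const_mul 2
  have ht : HasDerivAt (fun φ : ℝ => t * φ) t φ := by simpa using (hasDerivAt_id φ).const_mul t
  have := ((ht.exp.mul ((h2.sin.const_mul t).sub (h2.cos.const_mul 2))).div_const
    (2 * (t ^ 2 + 4)))
  refine this.congr_deriv ?_
  simp only [Pi.sub_apply]
  rw [sin_two_mul, cos_two_mul]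
  field_simp
  ring

theorem expSinCosPrimitive_pi_div_two (t : ℝ) :
    expSinCosPrimitive t (π / 2) = exp (t * (π / 2)) / (t ^ 2 + 4) := by
  rw [expSinCosPrimitive, mul_div_cancel₀ _ two_ne_zero, sin_pi, cos_pi]
  field_simp
  ring

theorem abs_mul_cos_lt_one {c : ℝ} (hc : |c| < 1) (η : ℝ) : |c * cos η| < 1 := by
  rw [abs_mul]
  exact lt_of_le_of_lt (mul_le_of_le_one_right (abs_nonneg c) (abs_cos_le_one η)) hc

theorem hasDerivAt_arccos_mul_cos {c : ℝ} (hc : |c| < 1) (η : ℝ) :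
    HasDerivAt (fun η => arccos (c * cos η)) (c * sin η / √(1 - (c * cos η) ^ 2)) η := by
  have hx := abs_mul_cos_lt_one hc η
  have := (hasDerivAt_arccos (by linarith [neg_abs_le (c * cos η)])
    (by linarith [le_abs_self (c * cos η)])).comp η ((hasDerivAt_cos η).const_mul c)
  exact this.congr_deriv (by ring)

theorem sq_mul_integral_exp_arccos_mul_cos (t : ℝ) {c : ℝ} (hc : |c| < 1) :
    c ^ 2 * ∫ η in 0..π / 2, exp (t * arccos (c * cos η)) * cos η * sin η
      = expSinCosPrimitive t (π / 2) - expSinCosPrimitive t (arccos c) := by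
  have hderiv : ∀ η, HasDerivAt (fun η => expSinCosPrimitive t (arccos (c * cos η)))
      (c ^ 2 * (exp (t * arccos (c * cos η)) * cos η * sin η)) η := by
    intro η
    have hx := abs_mul_cos_lt_one hc η
    have hsqrt : √(1 - c ^ 2 * cos η ^ 2) ≠ 0 := by
      have := (sq_lt_one_iff_abs_lt_one _).mpr hx
      rw [mul_pow] at this
      positivity
    refine ((hasDerivAt_expSinCosPrimitive t _).comp η
      (hasDerivAt_arccos_mul_cos hc η)).congr_deriv ?_
    rw [sin_arccos, cos_arccos (abs_le.mp hx.le).1 (abs_le.mp hx.le).2]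
    field_simp
  rw [← intervalIntegral.integral_const_mul, integral_eq_sub_of_hasDerivAt (fun η _ => hderiv η)
    (by apply Continuous.intervalIntegrable; fun_prop)]
  simp [cos_pi_div_two, arccos_zero]

noncomputable def innerIntegral (t θ : ℝ) : ℝ :=
  ∫ η in 0..π / 2, exp (t * arccos (cos θ * cos η)) * cos η * sin η

theorem continuous_innerIntegral (t : ℝ) : Continuous (innerIntegral t) :=
  continuous_parametric_intervalIntegral_of_continuous' (by fun_prop) _ _

theorem innerIntegral_even (t : ℝ) : (innerIntegral t).Even := fun θ => by
  simp only [innerIntegral, cos_neg]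

theorem innerIntegral_eq {t θ : ℝ} (hθ : θ ∈ Ioo 0 (π / 2)) :
    innerIntegral t θ
      = (expSinCosPrimitive t (π / 2) - expSinCosPrimitive t θ) / cos θ ^ 2 := by
  have hcos_pos : 0 < cos θ := cos_pos_of_mem_Ioo ⟨by linarith [hθ.1, pi_pos], hθ.2⟩
  have hcos_lt : cos θ < 1 := by
    simpa using cos_lt_cos_of_nonneg_of_le_pi le_rfl (by linarith [hθ.2, pi_pos]) hθ.1
  have h := sq_mul_integral_exp_arccos_mul_cos t (abs_lt.mpr ⟨by linarith, hcos_lt⟩)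
  rw [arccos_cos hθ.1.le (by linarith [hθ.2, pi_pos])] at h
  rw [innerIntegral, ← h]
  field_simp

theorem tendsto_mul_tan_nhdsLT_pi_div_two {f : ℝ → ℝ} {f' : ℝ} (hf : HasDerivAt f f' (π / 2))
    (hf₀ : f (π / 2) = 0) : Tendsto (fun θ => f θ * tan θ) (𝓝[<] (π / 2)) (𝓝 (-f')) := by
  have hslope : ∀ {g : ℝ → ℝ} {g'}, HasDerivAt g g' (π / 2) → g (π / 2) = 0 →
      Tendsto (fun θ => g θ / (θ - π / 2)) (𝓝[<] (π / 2)) (𝓝 g') := fun hg hg₀ => by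
    have := (hasDerivAt_iff_tendsto_slope.mp hg).mono_left (nhdsLT_le_nhdsNE (π / 2))
    simpa [slope_fun_def_field, hg₀] using this
  have hsin : Tendsto sin (𝓝[<] (π / 2)) (𝓝 1) := by
    simpa using continuous_sin.continuousWithinAt.tendsto (s := Iio (π / 2)) (x := π / 2)
  have hlim := ((hslope hf hf₀).div (hslope (hasDerivAt_cos (π / 2)) cos_pi_div_two)
    (by simp)).mul hsin
  simp only [sin_pi_div_two] at hlim
  refine (hlim.congr' ?_).trans (by norm_num [div_neg])
  filter_upwards [self_mem_nhdsWithin] with θ hθ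
  rw [Pi.div_apply, div_div_div_cancel_right₀ (sub_ne_zero.mpr (ne_of_lt hθ)), tan_eq_sin_div_cos]
  ring

theorem integral_innerIntegral {t : ℝ} (ht : t ≠ 0) :
    ∫ θ in 0..π / 2, innerIntegral t θ
      = (2 * (exp (t * π / 2) - 1) / t + t * exp (t * π / 2)) / (4 + t ^ 2) := by
  rw [show t * π / 2 = t * (π / 2) by ring]
  set E := exp (t * (π / 2)) with hE
  set Φ : ℝ → ℝ := fun θ => ((E - exp (t * θ)) * tan θ + 2 * exp (t * θ) / t) / (t ^ 2 + 4)
  have hexp (θ : ℝ) : HasDerivAt (fun θ => exp (t * θ)) (exp (t * θ) * t) θ := by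
    simpa using ((hasDerivAt_id θ).const_mul t).exp
  have hderiv : ∀ θ ∈ Ioo 0 (π / 2), HasDerivAt Φ (innerIntegral t θ) θ := by
    intro θ hθ
    have hcos : cos θ ≠ 0 := (cos_pos_of_mem_Ioo ⟨by linarith [hθ.1, pi_pos], hθ.2⟩).ne'
    refine ((((hexp θ).const_sub E).mul (hasDerivAt_tan hcos)).add
      (((hexp θ).const_mul 2).div_const t)).div_const _ |>.congr_deriv ?_
    rw [innerIntegral_eq hθ, expSinCosPrimitive_pi_div_two, ← hE, expSinCosPrimitive,
      tan_eq_sin_div_cos, sin_two_mul, cos_two_mul]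
    field_simp
    ring
  have h₀ : Tendsto Φ (𝓝[>] 0) (𝓝 (2 / t / (t ^ 2 + 4))) := by
    have htan : ContinuousAt tan 0 := continuousAt_tan.mpr (by simp)
    have : ContinuousAt Φ 0 := by fun_prop (disch := positivity)
    simpa [Φ] using this.tendsto.mono_left nhdsWithin_le_nhds
  have h₁ : Tendsto Φ (𝓝[<] (π / 2)) (𝓝 ((E * t + 2 * E / t) / (t ^ 2 + 4))) := by
    have htan := tendsto_mul_tan_nhdsLT_pi_div_two ((hexp (π / 2)).const_sub E) (sub_self E)
    have hrest : Tendsto (fun θ => 2 * exp (t * θ) / t) (𝓝[<] (π / 2)) (𝓝 (2 * E / t)) :=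
      (Continuous.tendsto (by fun_prop) _).mono_left nhdsWithin_le_nhds
    simpa using (htan.add hrest).div_const (t ^ 2 + 4)
  rw [integral_eq_sub_of_hasDerivAt_of_tendsto (by positivity) hderiv
    ((continuous_innerIntegral t).intervalIntegrable _ _) h₀ h₁, mul_div_assoc]
  field_simp
  ring

theorem mgfM_eq (n : ℕ) (t : ℝ) :
    mgfM n t = n / π * ∫ θ in -(π / n)..π / n, innerIntegral t θ := by
  rw [mgfM, intervalIntegral.integral_const, smul_eq_mul]
  rcases eq_or_ne (n : ℝ) 0 with hn | hn
  · simp [hn]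
  · simp only [innerIntegral]
    field_simp
    ring

theorem mgf_formula_RP3 (t : ℝ) (ht : t ≠ 0) :
    mgfM 2 t =
      (4 / (Real.pi * (4 + t ^ 2))) *
        ( 2 * (Real.exp (t * Real.pi / 2) - 1) / t + t * Real.exp (t * Real.pi / 2) ) := by
  rw [mgfM_eq, Nat.cast_ofNat,
    (innerIntegral_even t).integral_neg_self_eq_two_mul (continuous_innerIntegral t),
    integral_innerIntegral ht]
  field_simp
  ring
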